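/- For every integer k ≥ 1 and every z > 0, the steady-state densities satisfy the first-order recursion 𝒜_k′(z) = −(B/(2k)) · z · 𝒜_{k−1}(z), where 𝒜_k′ denotes the derivative with respect to z. -/

import Mathlib

open Real MeasureTheory Set

/-- The steady-state generation-`k` density in the normalized distance
`z = |x|√(λ/D)` from the origin:
`𝒜_k(z) = (μ(λB)^k/(k!(4πD)^{n/2})) ∫₀^∞ s^{k−n/2} exp(−λs − z²/(4λs)) ds`. -/
noncomputable def steadyDensity (n : ℕ) (lam D B mu : ℝ) (k : ℕ) (z : ℝ) : ℝ :=
  (mu * (lam * B) ^ k / ((Nat.factorial k : ℝ) * (4 * π * D) ^ ((n : ℝ) / 2))) *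
    ∫ s in Set.Ioi (0:ℝ),
      s ^ ((k : ℝ) - (n : ℝ) / 2) * Real.exp (-lam * s - z ^ 2 / (4 * lam * s))

/-!
Differentiating under the integral sign, `∂_z exp(−z²/(4λs)) = −(z/(2λ)) s⁻¹ exp(−z²/(4λs))`
lowers the power of `s` by one and so turns the integral of generation `k` into that of
generation `k − 1`, while the prefactors of consecutive generations differ by `λB/k`.
Differentiation is legitimate because for `x` near `z ≠ 0` the derivative is dominated by a
multiple of `s^(k−1−n/2) exp(−λs − (z/2)²/(4λs))`, which is integrable on `(0, ∞)`: near `0` the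
factor `exp(−c/s)` beats every power of `s`, near `∞` the factor `exp(−λs)` does.
-/

lemma pow_mul_exp_neg_mul_le (m : ℕ) {c t : ℝ} (hc : 0 < c) (ht : 0 ≤ t) :
    t ^ m * exp (-(c * t)) ≤ m.factorial / c ^ m := by
  have h := pow_div_factorial_le_exp (c * t) (by positivity) m
  rw [mul_pow, div_le_iff₀ (by positivity)] at h
  rw [le_div_iff₀ (by positivity), exp_neg]
  calc t ^ m * (exp (c * t))⁻¹ * c ^ m = c ^ m * t ^ m * (exp (c * t))⁻¹ := by ring
    _ ≤ exp (c * t) * m.factorial * (exp (c * t))⁻¹ := by gcongr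
    _ = m.factorial := by field_simp

lemma rpow_le_inv_pow_add_pow {s : ℝ} (hs : 0 < s) {a : ℝ} {m : ℕ} (ha : |a| ≤ m) :
    s ^ a ≤ s⁻¹ ^ m + s ^ m := by
  rcases le_total s 1 with hs1 | hs1
  · calc s ^ a ≤ s ^ (-(m : ℝ)) :=
          rpow_le_rpow_of_exponent_ge hs hs1 (by linarith [neg_abs_le a])
      _ = s⁻¹ ^ m := by rw [rpow_neg hs.le, rpow_natCast, inv_pow]
      _ ≤ s⁻¹ ^ m + s ^ m := le_add_of_nonneg_right (by positivity)
  · calc s ^ a ≤ s ^ (m : ℝ) := rpow_le_rpow_of_exponent_le hs1 ((le_abs_self a).trans ha)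
      _ = s ^ m := rpow_natCast s m
      _ ≤ s⁻¹ ^ m + s ^ m := le_add_of_nonneg_left (by positivity)

noncomputable def steadyKernel (a lam z s : ℝ) : ℝ :=
  s ^ a * exp (-lam * s - z ^ 2 / (4 * lam * s))

lemma steadyKernel_le_exp (a : ℝ) {lam z : ℝ} (hlam : 0 < lam) (hz : z ≠ 0) :
    ∃ K, ∀ s ∈ Ioi (0 : ℝ), steadyKernel a lam z s ≤ K * exp (-(lam / 2 * s)) := by
  set c := z ^ 2 / (4 * lam)
  have hc : 0 < c := by positivity
  set m := ⌈|a|⌉₊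
  refine ⟨m.factorial / c ^ m + m.factorial / (lam / 2) ^ m, fun s (hs : 0 < s) => ?_⟩
  have hsplit : exp (-lam * s - z ^ 2 / (4 * lam * s))
      = exp (-(c * s⁻¹)) * exp (-(lam / 2 * s)) * exp (-(lam / 2 * s)) := by
    rw [← exp_add, ← exp_add]; congr 1; simp only [c]; field_simp; ring
  have hE1 : exp (-(lam / 2 * s)) ≤ 1 := exp_le_one_iff.2 (by nlinarith)
  have hE2 : exp (-(c * s⁻¹)) ≤ 1 := exp_le_one_iff.2 (neg_nonpos.2 (by positivity))
  calc steadyKernel a lam z s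
      = s ^ a * (exp (-(c * s⁻¹)) * exp (-(lam / 2 * s))) * exp (-(lam / 2 * s)) := by
        rw [steadyKernel, hsplit]; ring
    _ ≤ (s⁻¹ ^ m + s ^ m) * (exp (-(c * s⁻¹)) * exp (-(lam / 2 * s))) * exp (-(lam / 2 * s)) := by
        gcongr
        exact rpow_le_inv_pow_add_pow hs (Nat.le_ceil _)
    _ ≤ (s⁻¹ ^ m * exp (-(c * s⁻¹)) + s ^ m * exp (-(lam / 2 * s))) * exp (-(lam / 2 * s)) := by
        gcongr
        rw [add_mul]
        exact add_le_add (mul_le_mul_of_nonneg_left (mul_le_of_le_one_right (by positivity) hE1)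
          (by positivity)) (mul_le_mul_of_nonneg_left (mul_le_of_le_one_left (by positivity) hE2)
          (by positivity))
    _ ≤ _ := by
        gcongr
        · exact pow_mul_exp_neg_mul_le m hc (by positivity)
        · exact pow_mul_exp_neg_mul_le m (by positivity) hs.le

lemma continuousOn_steadyKernel (a : ℝ) {lam : ℝ} (hlam : lam ≠ 0) (z : ℝ) :
    ContinuousOn (steadyKernel a lam z) (Ioi 0) := by
  intro s hs
  have hs0 : s ≠ 0 := (mem_Ioi.1 hs).ne'
  apply ContinuousAt.continuousWithinAt
  unfold steadyKernel
  fun_prop (disch := simp [hs0, hlam])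

lemma hasDerivAt_steadyKernel (a lam z : ℝ) {s : ℝ} (hs : 0 < s) :
    HasDerivAt (steadyKernel a lam · s) (-(z / (2 * lam)) * steadyKernel (a - 1) lam z s) z := by
  have h := (((hasDerivAt_pow 2 z).div_const (4 * lam * s)).const_sub (-lam * s)).exp
  refine (h.const_mul (s ^ a)).congr_deriv ?_
  rw [steadyKernel, rpow_sub_one hs.ne']
  field_simp
  ring

lemma steadyKernel_le_of_sq_le (a : ℝ) {lam y z s : ℝ} (hlam : 0 < lam) (hs : 0 < s)
    (hyz : y ^ 2 ≤ z ^ 2) :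
    steadyKernel a lam z s ≤ steadyKernel a lam y s := by
  unfold steadyKernel
  gcongr

lemma integrableOn_steadyKernel (a : ℝ) {lam z : ℝ} (hlam : 0 < lam) (hz : z ≠ 0) :
    IntegrableOn (steadyKernel a lam z) (Ioi 0) := by
  obtain ⟨K, hK⟩ := steadyKernel_le_exp a hlam hz
  refine ((exp_neg_integrableOn_Ioi 0 (by positivity : 0 < lam / 2)).const_mul K).mono'
    ((continuousOn_steadyKernel a hlam.ne' z).aestronglyMeasurable measurableSet_Ioi) ?_
  filter_upwards [ae_restrict_mem measurableSet_Ioi] with s (hs : 0 < s)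
  rw [norm_of_nonneg (by unfold steadyKernel; positivity)]
  exact (hK s hs).trans_eq (by rw [neg_mul])

lemma hasDerivAt_integral_steadyKernel (a : ℝ) {lam z : ℝ} (hlam : 0 < lam) (hz : z ≠ 0) :
    HasDerivAt (fun x => ∫ s in Ioi 0, steadyKernel a lam x s)
      (-(z / (2 * lam)) * ∫ s in Ioi 0, steadyKernel (a - 1) lam z s) z := by
  have hz' : 0 < |z| := abs_pos.2 hz
  have hbound : ∀ s ∈ Ioi (0 : ℝ), ∀ x ∈ Metric.ball z (|z| / 2),
      ‖-(x / (2 * lam)) * steadyKernel (a - 1) lam x s‖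
        ≤ 3 * |z| / (4 * lam) * steadyKernel (a - 1) lam (z / 2) s := by
    intro s (hs : 0 < s) x hx
    rw [Metric.mem_ball, dist_eq] at hx
    have hx_lower : |z| / 2 < |x| := by linarith [abs_sub_abs_le_abs_sub z x, abs_sub_comm x z]
    have hx_upper : |x| < 3 * |z| / 2 := by linarith [abs_sub_abs_le_abs_sub x z]
    have hK : 0 ≤ steadyKernel (a - 1) lam x s := by unfold steadyKernel; positivity
    rw [norm_mul, norm_neg, norm_div, norm_of_nonneg hK,
      norm_of_nonneg (by positivity : 0 ≤ 2 * lam), Real.norm_eq_abs]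
    gcongr ?_ * ?_
    · rw [div_le_div_iff₀ (by positivity) (by positivity)]
      nlinarith
    · refine steadyKernel_le_of_sq_le _ hlam hs (sq_le_sq.2 ?_)
      rw [abs_div, abs_two]
      exact hx_lower.le
  have key := hasDerivAt_integral_of_dominated_loc_of_deriv_le
    (μ := volume.restrict (Ioi 0)) (F := fun x s => steadyKernel a lam x s)
    (F' := fun x s => -(x / (2 * lam)) * steadyKernel (a - 1) lam x s)
    (Metric.ball_mem_nhds z (by positivity))
    (.of_forall fun x => (continuousOn_steadyKernel a hlam.ne' x).aestronglyMeasurable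
      measurableSet_Ioi)
    (integrableOn_steadyKernel a hlam hz)
    (((continuousOn_steadyKernel (a - 1) hlam.ne' z).aestronglyMeasurable
      measurableSet_Ioi).const_mul _)
    ((ae_restrict_mem measurableSet_Ioi).mono hbound)
    ((integrableOn_steadyKernel (a - 1) hlam (by simpa using hz)).const_mul _)
    ((ae_restrict_mem measurableSet_Ioi).mono fun s hs x _ => hasDerivAt_steadyKernel a lam x hs)
  simpa only [integral_const_mul] using key.2

noncomputable def steadyCoeff (n : ℕ) (lam D B mu : ℝ) (k : ℕ) : ℝ :=
  mu * (lam * B) ^ k / ((Nat.factorial k : ℝ) * (4 * π * D) ^ ((n : ℝ) / 2))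

lemma steadyCoeff_succ (n : ℕ) (lam D B mu : ℝ) (k : ℕ) :
    steadyCoeff n lam D B mu (k + 1) = lam * B / (k + 1) * steadyCoeff n lam D B mu k := by
  simp only [steadyCoeff, Nat.factorial_succ, Nat.cast_mul, div_eq_mul_inv, mul_inv]
  push_cast
  ring

lemma steadyDensity_eq_steadyCoeff_mul (n : ℕ) (lam D B mu : ℝ) (k : ℕ) :
    steadyDensity n lam D B mu k =
      fun z => steadyCoeff n lam D B mu k * ∫ s in Ioi 0, steadyKernel (k - n / 2) lam z s :=
  rfl

theorem steadyDensity_deriv_general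
    (n : ℕ) (lam D B mu : ℝ)
    (hlam : 0 < lam)
    (k : ℕ) (hk : 1 ≤ k) (z : ℝ) (hz : 0 < z) :
    deriv (steadyDensity n lam D B mu k) z =
      -(B / (2 * k)) * z * steadyDensity n lam D B mu (k - 1) z := by
  obtain ⟨j, rfl⟩ := Nat.exists_eq_add_of_le' hk
  have hderiv := (hasDerivAt_integral_steadyKernel ((j + 1 : ℕ) - n / 2) hlam hz.ne').const_mul
    (steadyCoeff n lam D B mu (j + 1))
  have hexp : ((j + 1 : ℕ) : ℝ) - n / 2 - 1 = j - n / 2 := by push_cast; ring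
  rw [steadyDensity_eq_steadyCoeff_mul, hderiv.deriv, hexp, Nat.add_sub_cancel,
    steadyDensity_eq_steadyCoeff_mul, steadyCoeff_succ]
  push_cast
  field_simp

/-- For `k ≥ 1` and `z > 0`: `𝒜_k′(z) = −(B/(2k)) z 𝒜_{k−1}(z)`. -/
theorem steadyDensity_deriv
    (n : ℕ) (hn : 1 ≤ n) (lam D B mu : ℝ)
    (hlam : 0 < lam) (hD : 0 < D) (hB : 0 < B) (hmu : 0 < mu)
    (k : ℕ) (hk : 1 ≤ k) (z : ℝ) (hz : 0 < z) :
    deriv (steadyDensity n lam D B mu k) z =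
      -(B / (2 * k)) * z * steadyDensity n lam D B mu (k - 1) z :=
  steadyDensity_deriv_general n lam D B mu hlam k hk z hz
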